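/- arXiv:2511.22790 — 6 statements merged into one kernel-verified Lean document; each statement's English description precedes it below -/
import Mathlib

section
/- For the quadratic polynomial q₂(x) with coefficients given by q₂(x) = A s² + B s + u_i where s = (x - x_i)/h, A = (u_{i-1} - 2u_i + u_{i+1})/2, B = (u_{i+1} - u_{i-1})/2, the smoothness indicator β = Σ_{α=1}^{2} ∫_{x_{i-1/2}}^{x_{i+1/2}} h^{2α-1} (q₂^{(α)}(x))² dx equals (13/12)(u_{i-1} - 2u_i + u_{i+1})² + (1/4)(u_{i-1} - u_{i+1})². -/
/-! With `A`, `B` as in the statement, `q₂'` is affine with slope `2A/h²` and value `B/h` at `x_i`,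
and `q₂''` is the constant `2A/h²`. Over the cell centred at `x_i` the cross term of `(q₂')²`
integrates to zero, so the two summands are `A²/3 + B²` and `4A²`, and their sum
`13A²/3 + B²` is the claimed expression. -/

open intervalIntegral

theorem hasDerivAt_quadratic_div (a b c d h x : ℝ) :
    HasDerivAt (fun x => a * ((x - c) / h) ^ 2 + b * ((x - c) / h) + d)
      (2 * a / h ^ 2 * (x - c) + b / h) x := by
  have hs : HasDerivAt (fun x => (x - c) / h) (1 / h) x := by
    simpa using ((hasDerivAt_id' x).sub_const c).div_const h
  refine ((((hs.pow 2).const_mul a).add (hs.const_mul b)).add_const d).congr_deriv ?_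
  norm_num
  ring

theorem deriv_quadratic_div (a b c d h : ℝ) :
    deriv (fun x => a * ((x - c) / h) ^ 2 + b * ((x - c) / h) + d)
      = fun x => 2 * a / h ^ 2 * (x - c) + b / h :=
  funext fun x => (hasDerivAt_quadratic_div a b c d h x).deriv

theorem iteratedDeriv_two_quadratic_div (a b c d h : ℝ) :
    iteratedDeriv 2 (fun x => a * ((x - c) / h) ^ 2 + b * ((x - c) / h) + d)
      = fun _ => 2 * a / h ^ 2 := by
  rw [iteratedDeriv_succ, iteratedDeriv_one, deriv_quadratic_div]
  funext x
  simp

theorem integral_affine_sq (α β c r : ℝ) :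
    ∫ x in c - r..c + r, (α * (x - c) + β) ^ 2 = 2 * r * (α ^ 2 * r ^ 2 / 3 + β ^ 2) := by
  have hF : ∀ x, HasDerivAt
      (fun x => α ^ 2 * (x - c) ^ 3 / 3 + α * β * (x - c) ^ 2 + β ^ 2 * (x - c))
      ((α * (x - c) + β) ^ 2) x := by
    intro x
    have hx := (hasDerivAt_id' x).sub_const c
    refine ((((hx.pow 3).const_mul (α ^ 2)).div_const 3).add ((hx.pow 2).const_mul (α * β))
      |>.add (hx.const_mul (β ^ 2))).congr_deriv ?_
    norm_num
    ring
  rw [integral_eq_sub_of_hasDerivAt (fun x _ => hF x) (Continuous.intervalIntegrable (by fun_prop) _ _)]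
  ring

/-- The Jiang–Shu smoothness indicator of the quadratic interpolant
`q₂(x) = A s² + B s + u_i`, `s = (x - x_i)/h`,
with `A = (u_{i-1} - 2u_i + u_{i+1})/2` and `B = (u_{i+1} - u_{i-1})/2`,
equals `(13/12)(u_{i-1} - 2u_i + u_{i+1})² + (1/4)(u_{i-1} - u_{i+1})²`. -/
theorem stmt_4 (h xi um1 u0 up1 : ℝ) (hh : 0 < h)
    (q₂ : ℝ → ℝ)
    (hq : q₂ = fun x =>
      ((um1 - 2 * u0 + up1) / 2) * ((x - xi) / h) ^ 2
      + ((up1 - um1) / 2) * ((x - xi) / h) + u0) :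
    (∫ x in (xi - h / 2)..(xi + h / 2), h ^ (2 * 1 - 1) * (iteratedDeriv 1 q₂ x) ^ 2)
      + (∫ x in (xi - h / 2)..(xi + h / 2), h ^ (2 * 2 - 1) * (iteratedDeriv 2 q₂ x) ^ 2)
      = (13 / 12) * (um1 - 2 * u0 + up1) ^ 2 + (1 / 4) * (um1 - up1) ^ 2 := by
  subst hq
  rw [iteratedDeriv_one, deriv_quadratic_div, iteratedDeriv_two_quadratic_div]
  simp only [integral_const_mul, integral_affine_sq, integral_const, smul_eq_mul]
  field_simp [hh.ne']
  ring
end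

section
/- If the smoothness indicators satisfy β_k = D(1 + O(h)) for a common constant D > 0 (i.e., |β_k - D| ≤ C·D·h for all k) and τ = ((|β₁-β₂| + |β₁-β₃|)/2)², then the nonlinear weights ω_k = γ_k(1 + τ/(ε+β_k)) / Σ_l γ_l(1 + τ/(ε+β_l)) satisfy |ω_k - γ_k| ≤ C' h for a constant C' independent of h, for all sufficiently small h. -/
/-- Auxiliary: if the perturbations `a_k` lie in `[0, B]` and the `γ`'s are
positive with sum 1, then the first normalized weight is within `B` of `γ₁`. -/
lemma weno_aux (γ₁ γ₂ γ₃ a₁ a₂ a₃ B : ℝ)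
    (hγ₁ : 0 < γ₁) (hγ₂ : 0 < γ₂) (hγ₃ : 0 < γ₃)
    (hsum : γ₁ + γ₂ + γ₃ = 1)
    (h1 : 0 ≤ a₁) (h2 : 0 ≤ a₂) (h3 : 0 ≤ a₃)
    (hb1 : a₁ ≤ B) (hb2 : a₂ ≤ B) (hb3 : a₃ ≤ B) :
    |γ₁ * (1 + a₁) / (γ₁ * (1 + a₁) + γ₂ * (1 + a₂) + γ₃ * (1 + a₃)) - γ₁| ≤ B := by
  set m : ℝ := γ₁ * a₁ + γ₂ * a₂ + γ₃ * a₃ with hm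
  have hm0 : 0 ≤ m := by positivity
  have hmB : m ≤ B := by nlinarith
  have hSeq : γ₁ * (1 + a₁) + γ₂ * (1 + a₂) + γ₃ * (1 + a₃) = 1 + m := by
    linear_combination hsum
  rw [hSeq]
  have hS0 : (0 : ℝ) < 1 + m := by linarith
  have hkey : γ₁ * (1 + a₁) / (1 + m) - γ₁ = γ₁ * (a₁ - m) / (1 + m) := by
    field_simp
    ring
  rw [hkey, abs_div, abs_of_pos hS0, div_le_iff₀ hS0, abs_mul, abs_of_pos hγ₁]
  have habs : |a₁ - m| ≤ B := by
    rw [abs_le]; constructor <;> linarith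
  have hγ1le : γ₁ ≤ 1 := by linarith
  have hB0 : 0 ≤ B := le_trans h1 hb1
  nlinarith [abs_nonneg (a₁ - m), mul_le_mul_of_nonneg_left habs (le_of_lt hγ₁)]

/-- Consistency of WENO-Z type nonlinear weights with the linear weights in
smooth regions: if the smoothness indicators satisfy `β_k = D(1 + O(h))`,
then each nonlinear weight is within `O(h)` of the corresponding linear
weight, for all sufficiently small `h`. -/
theorem stmt_6 (γ₁ γ₂ γ₃ ε D C : ℝ)
    (hγ₁ : 0 < γ₁) (hγ₂ : 0 < γ₂) (hγ₃ : 0 < γ₃)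
    (hsum : γ₁ + γ₂ + γ₃ = 1) (hε : 0 < ε) (hD : 0 < D) (hC : 0 ≤ C) :
    ∃ C' > (0 : ℝ), ∃ δ > (0 : ℝ), ∀ h : ℝ, 0 < h → h < δ →
      ∀ β₁ β₂ β₃ : ℝ,
        0 ≤ β₁ → 0 ≤ β₂ → 0 ≤ β₃ →
        |β₁ - D| ≤ C * D * h → |β₂ - D| ≤ C * D * h → |β₃ - D| ≤ C * D * h →
        ∀ τ ω₁ ω₂ ω₃ : ℝ,
          τ = ((|β₁ - β₂| + |β₁ - β₃|) / 2) ^ 2 →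
          ω₁ = γ₁ * (1 + τ / (ε + β₁)) /
            (γ₁ * (1 + τ / (ε + β₁)) + γ₂ * (1 + τ / (ε + β₂)) + γ₃ * (1 + τ / (ε + β₃))) →
          ω₂ = γ₂ * (1 + τ / (ε + β₂)) /
            (γ₁ * (1 + τ / (ε + β₁)) + γ₂ * (1 + τ / (ε + β₂)) + γ₃ * (1 + τ / (ε + β₃))) →
          ω₃ = γ₃ * (1 + τ / (ε + β₃)) /
            (γ₁ * (1 + τ / (ε + β₁)) + γ₂ * (1 + τ / (ε + β₂)) + γ₃ * (1 + τ / (ε + β₃))) →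
          |ω₁ - γ₁| ≤ C' * h ∧ |ω₂ - γ₂| ≤ C' * h ∧ |ω₃ - γ₃| ≤ C' * h := by
  refine ⟨4 * C ^ 2 * D ^ 2 / ε + 1, by positivity, 1, one_pos, ?_⟩
  intro h hh0 hh1 β₁ β₂ β₃ hβ₁ hβ₂ hβ₃ hc1 hc2 hc3 τ ω₁ ω₂ ω₃ hτ hω₁ hω₂ hω₃
  set a₁ : ℝ := τ / (ε + β₁) with ha₁
  set a₂ : ℝ := τ / (ε + β₂) with ha₂
  set a₃ : ℝ := τ / (ε + β₃) with ha₃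
  have hτ0 : 0 ≤ τ := by rw [hτ]; positivity
  -- bound τ
  have hd12 : |β₁ - β₂| ≤ 2 * (C * D * h) := by
    calc |β₁ - β₂| ≤ |β₁ - D| + |D - β₂| := abs_sub_le β₁ D β₂
    _ = |β₁ - D| + |β₂ - D| := by rw [abs_sub_comm D β₂]
    _ ≤ 2 * (C * D * h) := by linarith
  have hd13 : |β₁ - β₃| ≤ 2 * (C * D * h) := by
    calc |β₁ - β₃| ≤ |β₁ - D| + |D - β₃| := abs_sub_le β₁ D β₃
    _ = |β₁ - D| + |β₃ - D| := by rw [abs_sub_comm D β₃]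
    _ ≤ 2 * (C * D * h) := by linarith
  have hτle : τ ≤ 4 * C ^ 2 * D ^ 2 * h ^ 2 := by
    rw [hτ]
    nlinarith [abs_nonneg (β₁ - β₂), abs_nonneg (β₁ - β₃)]
  set B : ℝ := 4 * C ^ 2 * D ^ 2 / ε * h with hB
  have hBbound : ∀ β : ℝ, 0 ≤ β → τ / (ε + β) ≤ B := by
    intro β hβ
    have hεβ : 0 < ε + β := by linarith
    calc τ / (ε + β) ≤ τ / ε := by
          apply div_le_div_of_nonneg_left hτ0 hε; linarith
    _ ≤ 4 * C ^ 2 * D ^ 2 * h ^ 2 / ε := (div_le_div_iff_of_pos_right hε).mpr hτle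
    _ ≤ 4 * C ^ 2 * D ^ 2 * h / ε := by
          apply (div_le_div_iff_of_pos_right hε).mpr; nlinarith
    _ = B := by rw [hB]; ring
  have hb1 : a₁ ≤ B := hBbound β₁ hβ₁
  have hb2 : a₂ ≤ B := hBbound β₂ hβ₂
  have hb3 : a₃ ≤ B := hBbound β₃ hβ₃
  have h1 : 0 ≤ a₁ := by rw [ha₁]; positivity
  have h2 : 0 ≤ a₂ := by rw [ha₂]; positivity
  have h3 : 0 ≤ a₃ := by rw [ha₃]; positivity
  have hBC : B ≤ (4 * C ^ 2 * D ^ 2 / ε + 1) * h := by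
    rw [hB, add_mul, one_mul]
    exact le_add_of_nonneg_right hh0.le
  refine ⟨?_, ?_, ?_⟩
  · have := weno_aux γ₁ γ₂ γ₃ a₁ a₂ a₃ B hγ₁ hγ₂ hγ₃ hsum h1 h2 h3 hb1 hb2 hb3
    have heq : ω₁ = γ₁ * (1 + a₁) / (γ₁ * (1 + a₁) + γ₂ * (1 + a₂) + γ₃ * (1 + a₃)) := by
      rw [hω₁]
    rw [heq]; linarith
  · have := weno_aux γ₂ γ₃ γ₁ a₂ a₃ a₁ B hγ₂ hγ₃ hγ₁ (by linarith) h2 h3 h1 hb2 hb3 hb1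
    have heq : ω₂ = γ₂ * (1 + a₂) / (γ₂ * (1 + a₂) + γ₃ * (1 + a₃) + γ₁ * (1 + a₁)) := by
      linear_combination hω₂
    rw [heq]; linarith
  · have := weno_aux γ₃ γ₁ γ₂ a₃ a₁ a₂ B hγ₃ hγ₁ hγ₂ (by linarith) h3 h1 h2 hb3 hb1 hb2
    have heq : ω₃ = γ₃ * (1 + a₃) / (γ₃ * (1 + a₃) + γ₁ * (1 + a₁) + γ₂ * (1 + a₂)) := by
      linear_combination hω₃
    rw [heq]; linarith
end

section
/- For a C⁶ function u and equally spaced values u_k = u(x + k·Δx), the finite difference (1/(48Δx²))(-5u_{-2} + 39u_{-1} - 34u₀ - 34u₁ + 39u₂ - 5u₃) approximates u''(x + Δx/2) with error O(Δx⁴); precisely, the difference is bounded by C·Δx⁴·sup|u⁽⁶⁾| on [x-2Δx, x+3Δx] for some absolute constant C. -/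
open Set Finset Nat

private lemma idw_eq (u : ℝ → ℝ) (hu : ContDiff ℝ 6 u) {s : Set ℝ}
    (hs : UniqueDiffOn ℝ s) {k : ℕ} (hk : (k : WithTop ℕ∞) ≤ 6) {y : ℝ} (hy : y ∈ s) :
    iteratedDerivWithin k u s y = iteratedDeriv k u y := by
  have h1 : HasFTaylorSeriesUpTo 6 u (ftaylorSeries ℝ u) :=
    contDiff_iff_ftaylorSeries.mp hu
  have h2 := (h1.hasFTaylorSeriesUpToOn s).eq_iteratedFDerivWithin_of_uniqueDiffOn
    (m := k) hk hs hy
  rw [iteratedDerivWithin_eq_iteratedFDerivWithin, iteratedDeriv_eq_iteratedFDeriv, ← h2]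
  rfl

private lemma taylor_est (u : ℝ → ℝ) (hu : ContDiff ℝ 6 u) (x₀ y M : ℝ) (hxy : x₀ ≤ y)
    (hM : ∀ t ∈ Icc x₀ y, |iteratedDeriv 6 u t| ≤ M) :
    |u y - ∑ k ∈ Finset.range 6, (k ! : ℝ)⁻¹ * (y - x₀) ^ k * iteratedDeriv k u x₀|
      ≤ M * (y - x₀) ^ 6 / 120 := by
  rcases eq_or_lt_of_le hxy with rfl | hlt
  · simp [Finset.sum_range_succ]
  have huds : UniqueDiffOn ℝ (Icc x₀ y) := uniqueDiffOn_Icc hlt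
  have hx₀ : x₀ ∈ Icc x₀ y := ⟨le_refl _, hxy⟩
  have hC : ∀ t ∈ Icc x₀ y, ‖iteratedDerivWithin (5 + 1) u (Icc x₀ y) t‖ ≤ M := by
    intro t ht
    rw [Real.norm_eq_abs, idw_eq u hu huds (by norm_num) ht]
    exact hM t ht
  have := taylor_mean_remainder_bound (f := u) (n := 5) hxy
    (hu.contDiffOn (s := Icc x₀ y)) (right_mem_Icc.mpr hxy) hC
  have hT : taylorWithinEval u 5 (Icc x₀ y) x₀ y
      = ∑ k ∈ Finset.range 6, (k ! : ℝ)⁻¹ * (y - x₀) ^ k * iteratedDeriv k u x₀ := by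
    rw [taylor_within_apply]
    refine Finset.sum_congr rfl fun k hk => ?_
    have hk6 : (k : WithTop ℕ∞) ≤ 6 := by exact_mod_cast (Finset.mem_range.mp hk).le
    rw [idw_eq u hu huds hk6 hx₀, smul_eq_mul]
  rw [hT] at this
  rw [Real.norm_eq_abs] at this
  calc |u y - ∑ k ∈ Finset.range 6, (k ! : ℝ)⁻¹ * (y - x₀) ^ k * iteratedDeriv k u x₀|
      ≤ M * (y - x₀) ^ (5 + 1) / (5 ! : ℕ) := this
    _ = M * (y - x₀) ^ 6 / 120 := by norm_num [Nat.factorial]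

private lemma taylor_est2 (u : ℝ → ℝ) (hu : ContDiff ℝ 6 u) (x₀ y M : ℝ)
    (hM : ∀ t ∈ uIcc x₀ y, |iteratedDeriv 6 u t| ≤ M) :
    |u y - ∑ k ∈ Finset.range 6, (k ! : ℝ)⁻¹ * (y - x₀) ^ k * iteratedDeriv k u x₀|
      ≤ M * |y - x₀| ^ 6 / 120 := by
  rcases le_total x₀ y with hxy | hxy
  · have := taylor_est u hu x₀ y M hxy (by
      intro t ht; exact hM t (by rwa [uIcc_of_le hxy]))
    rwa [abs_of_nonneg (sub_nonneg.mpr hxy)]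
  · -- reflect: v t = u (2x₀ - t)
    set v : ℝ → ℝ := fun t => u (2 * x₀ - t) with hv
    have hvcd : ContDiff ℝ 6 v := hu.comp (contDiff_const.sub contDiff_id)
    have he : v = fun t => (fun z => u (2 * x₀ + z)) (-t) := by
      funext t; simp [hv, sub_eq_add_neg]
    have hvk : ∀ (k : ℕ) (a : ℝ),
        iteratedDeriv k v a = (-1 : ℝ) ^ k * iteratedDeriv k u (2 * x₀ - a) := by
      intro k a
      have h2 : iteratedDeriv k v a
          = (-1 : ℝ) ^ k • iteratedDeriv k (fun z => u (2 * x₀ + z)) (-a) := by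
        rw [he]; exact iteratedDeriv_comp_neg k (fun z => u (2 * x₀ + z)) a
      rw [h2, iteratedDeriv_comp_const_add]
      simp [smul_eq_mul, sub_eq_add_neg]
    have hy' : x₀ ≤ 2 * x₀ - y := by linarith
    have hM' : ∀ t ∈ Icc x₀ (2 * x₀ - y), |iteratedDeriv 6 v t| ≤ M := by
      intro t ht
      rw [hvk 6 t]
      have hmem : (2 * x₀ - t) ∈ uIcc x₀ y := by
        rw [uIcc_of_ge hxy]
        obtain ⟨h1, h2⟩ := ht
        exact ⟨by linarith, by linarith⟩
      have h6 : ((-1 : ℝ)) ^ 6 * iteratedDeriv 6 u (2 * x₀ - t)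
          = iteratedDeriv 6 u (2 * x₀ - t) := by norm_num
      rw [h6]; exact hM _ hmem
    have key := taylor_est v hvcd x₀ (2 * x₀ - y) M hy' hM'
    have hvy : v (2 * x₀ - y) = u y := by simp [hv]
    have hsum : ∑ k ∈ Finset.range 6,
          (k ! : ℝ)⁻¹ * ((2 * x₀ - y) - x₀) ^ k * iteratedDeriv k v x₀
        = ∑ k ∈ Finset.range 6, (k ! : ℝ)⁻¹ * (y - x₀) ^ k * iteratedDeriv k u x₀ := by
      refine Finset.sum_congr rfl fun k _ => ?_
      rw [hvk k x₀]
      have h2 : (2 * x₀ - x₀) = x₀ := by ring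
      rw [h2]
      have hp : ((2 * x₀ - y) - x₀ : ℝ) = -(y - x₀) := by ring
      rw [hp, neg_pow]
      have hone : ((-1 : ℝ)) ^ k * (-1) ^ k = 1 := by rw [← mul_pow]; norm_num
      linear_combination ((k ! : ℝ))⁻¹ * (y - x₀) ^ k * iteratedDeriv k u x₀ * hone
    rw [hvy, hsum] at key
    have habs : ((2 * x₀ - y) - x₀) ^ 6 = |y - x₀| ^ 6 := by
      rw [abs_of_nonpos (by linarith)]; ring
    rwa [habs] at key

/-- The central finite difference formula for the second derivative at the
half point used in the AWENO flux is fourth-order accurate: for a `C⁶`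
function `u`, the difference is bounded by `C Δx⁴ sup|u⁽⁶⁾|` on
`[x - 2Δx, x + 3Δx]` for some absolute constant `C`. -/
theorem stmt_9 :
    ∃ C : ℝ, 0 < C ∧
      ∀ (u : ℝ → ℝ) (Δx x M : ℝ), 0 < Δx → ContDiff ℝ 6 u →
        (∀ y ∈ Set.Icc (x - 2 * Δx) (x + 3 * Δx), |iteratedDeriv 6 u y| ≤ M) →
        |(1 / (48 * Δx ^ 2)) *
            (-5 * u (x - 2 * Δx) + 39 * u (x - Δx) - 34 * u x
              - 34 * u (x + Δx) + 39 * u (x + 2 * Δx) - 5 * u (x + 3 * Δx))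
          - iteratedDeriv 2 u (x + Δx / 2)| ≤ C * Δx ^ 4 * M := by
  refine ⟨7, by norm_num, ?_⟩
  intro u Δx x M hΔx hu hM
  have hΔ : Δx ≠ 0 := ne_of_gt hΔx
  set x₀ : ℝ := x + Δx / 2 with hx₀
  set T : ℝ → ℝ :=
    fun y => ∑ k ∈ Finset.range 6, (k ! : ℝ)⁻¹ * (y - x₀) ^ k * iteratedDeriv k u x₀ with hTdef
  have hx₀mem : x₀ ∈ Icc (x - 2 * Δx) (x + 3 * Δx) := ⟨by simp [hx₀]; linarith, by simp [hx₀]; linarith⟩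
  have hM0 : 0 ≤ M := le_trans (abs_nonneg _) (hM x₀ hx₀mem)
  set B : ℝ := M * (5 / 2 * Δx) ^ 6 / 120 with hBdef
  have hB : ∀ y ∈ Icc (x - 2 * Δx) (x + 3 * Δx), |u y - T y| ≤ B := by
    intro y hy
    have hsub : uIcc x₀ y ⊆ Icc (x - 2 * Δx) (x + 3 * Δx) := uIcc_subset_Icc hx₀mem hy
    have h1 := taylor_est2 u hu x₀ y M (fun t ht => hM t (hsub ht))
    refine h1.trans ?_
    rw [hBdef]
    have habs : |y - x₀| ≤ 5 / 2 * Δx := by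
      obtain ⟨ha, hb⟩ := hy
      rw [abs_le]; constructor <;> simp [hx₀] <;> linarith
    gcongr
  have hTexp : ∀ y : ℝ, T y =
      iteratedDeriv 0 u x₀ + (y - x₀) * iteratedDeriv 1 u x₀
        + (y - x₀) ^ 2 / 2 * iteratedDeriv 2 u x₀ + (y - x₀) ^ 3 / 6 * iteratedDeriv 3 u x₀
        + (y - x₀) ^ 4 / 24 * iteratedDeriv 4 u x₀ + (y - x₀) ^ 5 / 120 * iteratedDeriv 5 u x₀ := by
    intro y
    rw [hTdef]
    simp only [Finset.sum_range_succ, Finset.sum_range_zero]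
    norm_num [Nat.factorial]
    ring
  have key : (1 / (48 * Δx ^ 2)) *
        (-5 * T (x - 2 * Δx) + 39 * T (x - Δx) - 34 * T x
          - 34 * T (x + Δx) + 39 * T (x + 2 * Δx) - 5 * T (x + 3 * Δx))
      = iteratedDeriv 2 u x₀ := by
    rw [hTexp, hTexp, hTexp, hTexp, hTexp, hTexp, hx₀]
    have h48ne : (48 * Δx ^ 2 : ℝ) ≠ 0 := by positivity
    rw [one_div, inv_mul_eq_div, div_eq_iff h48ne]
    ring
  have hrw : (1 / (48 * Δx ^ 2)) *
            (-5 * u (x - 2 * Δx) + 39 * u (x - Δx) - 34 * u x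
              - 34 * u (x + Δx) + 39 * u (x + 2 * Δx) - 5 * u (x + 3 * Δx))
          - iteratedDeriv 2 u x₀
      = (1 / (48 * Δx ^ 2)) *
            (-5 * (u (x - 2 * Δx) - T (x - 2 * Δx)) + 39 * (u (x - Δx) - T (x - Δx))
              - 34 * (u x - T x) - 34 * (u (x + Δx) - T (x + Δx))
              + 39 * (u (x + 2 * Δx) - T (x + 2 * Δx))
              - 5 * (u (x + 3 * Δx) - T (x + 3 * Δx))) := by
    rw [← key]; ring
  rw [hrw, abs_mul]
  have e1 := hB (x - 2 * Δx) ⟨by linarith, by linarith⟩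
  have e2 := hB (x - Δx) ⟨by linarith, by linarith⟩
  have e3 := hB x ⟨by linarith, by linarith⟩
  have e4 := hB (x + Δx) ⟨by linarith, by linarith⟩
  have e5 := hB (x + 2 * Δx) ⟨by linarith, by linarith⟩
  have e6 := hB (x + 3 * Δx) ⟨by linarith, by linarith⟩
  rw [abs_le] at e1 e2 e3 e4 e5 e6
  have hS : |(-5 * (u (x - 2 * Δx) - T (x - 2 * Δx)) + 39 * (u (x - Δx) - T (x - Δx))
              - 34 * (u x - T x) - 34 * (u (x + Δx) - T (x + Δx))
              + 39 * (u (x + 2 * Δx) - T (x + 2 * Δx))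
              - 5 * (u (x + 3 * Δx) - T (x + 3 * Δx)))| ≤ 156 * B := by
    rw [abs_le]
    constructor
    · obtain ⟨a1, b1⟩ := e1; obtain ⟨a2, b2⟩ := e2; obtain ⟨a3, b3⟩ := e3
      obtain ⟨a4, b4⟩ := e4; obtain ⟨a5, b5⟩ := e5; obtain ⟨a6, b6⟩ := e6
      linarith
    · obtain ⟨a1, b1⟩ := e1; obtain ⟨a2, b2⟩ := e2; obtain ⟨a3, b3⟩ := e3
      obtain ⟨a4, b4⟩ := e4; obtain ⟨a5, b5⟩ := e5; obtain ⟨a6, b6⟩ := e6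
      linarith
  have h48 : |1 / (48 * Δx ^ 2)| = 1 / (48 * Δx ^ 2) := abs_of_pos (by positivity)
  rw [h48]
  calc (1 / (48 * Δx ^ 2)) * |(-5 * (u (x - 2 * Δx) - T (x - 2 * Δx)) + 39 * (u (x - Δx) - T (x - Δx))
              - 34 * (u x - T x) - 34 * (u (x + Δx) - T (x + Δx))
              + 39 * (u (x + 2 * Δx) - T (x + 2 * Δx))
              - 5 * (u (x + 3 * Δx) - T (x + 3 * Δx)))|
      ≤ (1 / (48 * Δx ^ 2)) * (156 * B) := by
        have : (0:ℝ) ≤ 1 / (48 * Δx ^ 2) := by positivity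
        exact mul_le_mul_of_nonneg_left hS this
    _ = (40625 / 6144) * Δx ^ 4 * M := by rw [hBdef]; field_simp; ring
    _ ≤ 7 * Δx ^ 4 * M := by nlinarith [pow_nonneg hΔx.le 4, hM0, mul_nonneg (pow_nonneg hΔx.le 4) hM0]
end

section
/- If f: ℝ → ℝ is C⁶, then f(x + Δx/2) - (Δx²/24)·f''(x + Δx/2) + (7Δx⁴/5760)·f''''(x + Δx/2) agrees with the value ĥ defined by the implicit relation (ĥ(x+Δx/2) - ĥ(x-Δx/2))/Δx = f'(x) + O(Δx⁵) in the sense that: defining F(y) = f(y) - (Δx²/24) f''(y) + (7Δx⁴/5760) f''''(y), one has (F(x+Δx/2) - F(x-Δx/2))/Δx = f'(x) + O(Δx⁶) as Δx → 0. -/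
open Set

private lemma iterComp (m n : ℕ) (f : ℝ → ℝ) :
    iteratedDeriv m (iteratedDeriv n f) = iteratedDeriv (m + n) f := by
  simp only [iteratedDeriv_eq_iterate]
  exact (Function.iterate_add_apply deriv m n f).symm

private lemma iterDW_eq {n : ℕ∞} {k : ℕ} (hk : (k : ℕ∞) ≤ n) {f : ℝ → ℝ}
    (hf : ContDiff ℝ n f) {s : Set ℝ} (hs : UniqueDiffOn ℝ s) {x : ℝ} (hx : x ∈ s) :
    iteratedDerivWithin k f s x = iteratedDeriv k f x := by
  have h := ((contDiff_iff_ftaylorSeries.mp hf).hasFTaylorSeriesUpToOn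
    s).eq_iteratedFDerivWithin_of_uniqueDiffOn (m := k) (by exact_mod_cast hk) hs hx
  rw [iteratedDerivWithin_eq_iteratedFDerivWithin, iteratedDeriv_eq_iteratedFDeriv, ← h]
  rfl

private lemma taylor_two_sided (g : ℝ → ℝ) (n : ℕ) (hg : ContDiff ℝ (n + 1 : ℕ) g) (x : ℝ) :
    ∃ C : ℝ, 0 ≤ C ∧ ∀ s ∈ Set.Icc (0:ℝ) 1,
      |g (x + s) - ∑ k ∈ Finset.range (n + 1),
          s ^ k / (k.factorial : ℝ) * iteratedDeriv k g x| ≤ C * s ^ (n + 1) ∧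
      |g (x - s) - ∑ k ∈ Finset.range (n + 1),
          (-s) ^ k / (k.factorial : ℝ) * iteratedDeriv k g x| ≤ C * s ^ (n + 1) := by
  have hucc : ∀ y : ℝ, UniqueDiffOn ℝ (Icc y (y + 1)) := fun y =>
    uniqueDiffOn_Icc (by linarith)
  have hle : ∀ y : ℝ, y ≤ y + 1 := fun y => by linarith
  have hg' : ContDiff ℝ ((n : ℕ∞) + 1) g := by exact_mod_cast hg
  -- plus side
  obtain ⟨C1, hC1⟩ := exists_taylor_mean_remainder_bound (f := g) (n := n)
    (hle x) (hg'.contDiffOn)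
  -- minus side
  have hg2 : ContDiff ℝ ((n : ℕ∞) + 1) (fun t => g (-t)) :=
    hg'.comp contDiff_neg
  obtain ⟨C2, hC2⟩ := exists_taylor_mean_remainder_bound (f := fun t => g (-t)) (n := n)
    (hle (-x)) (hg2.contDiffOn)
  refine ⟨|C1| + |C2|, by positivity, fun s hs => ?_⟩
  obtain ⟨hs0, hs1⟩ := hs
  have hpow : (0:ℝ) ≤ s ^ (n + 1) := by positivity
  constructor
  · have hmem : x + s ∈ Icc x (x + 1) := ⟨by linarith, by linarith⟩
    have h := hC1 (x + s) hmem
    rw [taylor_within_apply] at h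
    have hsum : ∑ k ∈ Finset.range (n + 1), (((k.factorial : ℝ))⁻¹ * (x + s - x) ^ k) •
        iteratedDerivWithin k g (Icc x (x + 1)) x
        = ∑ k ∈ Finset.range (n + 1), s ^ k / (k.factorial : ℝ) * iteratedDeriv k g x := by
      refine Finset.sum_congr rfl fun k hk => ?_
      rw [iterDW_eq (f := g) (n := (n : ℕ∞) + 1) (by
          have : k ≤ n := Nat.lt_succ_iff.mp (Finset.mem_range.mp hk)
          exact_mod_cast le_trans (by exact_mod_cast this) le_self_add) hg' (hucc x)
        (left_mem_Icc.mpr (hle x))]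
      rw [smul_eq_mul]
      ring_nf
    rw [hsum] at h
    calc |g (x + s) - _| = ‖g (x + s) - _‖ := (Real.norm_eq_abs _).symm
      _ ≤ C1 * (x + s - x) ^ (n + 1) := h
      _ = C1 * s ^ (n + 1) := by ring_nf
      _ ≤ (|C1| + |C2|) * s ^ (n + 1) := by
          have : C1 ≤ |C1| + |C2| := le_trans (le_abs_self _) (le_add_of_nonneg_right (abs_nonneg _))
          exact mul_le_mul_of_nonneg_right this hpow
  · have hmem : -x + s ∈ Icc (-x) (-x + 1) := ⟨by linarith, by linarith⟩
    have h := hC2 (-x + s) hmem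
    rw [taylor_within_apply] at h
    have hval : g (-(-x + s)) = g (x - s) := by ring_nf
    have hsum : ∑ k ∈ Finset.range (n + 1), (((k.factorial : ℝ))⁻¹ * (-x + s - -x) ^ k) •
        iteratedDerivWithin k (fun t => g (-t)) (Icc (-x) (-x + 1)) (-x)
        = ∑ k ∈ Finset.range (n + 1), (-s) ^ k / (k.factorial : ℝ) * iteratedDeriv k g x := by
      refine Finset.sum_congr rfl fun k hk => ?_
      rw [iterDW_eq (f := fun t => g (-t)) (n := (n : ℕ∞) + 1) (by
          have : k ≤ n := Nat.lt_succ_iff.mp (Finset.mem_range.mp hk)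
          exact_mod_cast le_trans (by exact_mod_cast this) le_self_add) hg2 (hucc (-x))
        (left_mem_Icc.mpr (hle (-x)))]
      rw [iteratedDeriv_comp_neg, neg_neg, smul_eq_mul, smul_eq_mul]
      ring_nf
    rw [hsum, hval] at h
    calc |g (x - s) - _| = ‖g (x - s) - _‖ := (Real.norm_eq_abs _).symm
      _ ≤ C2 * (-x + s - -x) ^ (n + 1) := h
      _ = C2 * s ^ (n + 1) := by ring_nf
      _ ≤ (|C1| + |C2|) * s ^ (n + 1) := by
          have : C2 ≤ |C1| + |C2| := le_trans (le_abs_self _) (le_add_of_nonneg_left (abs_nonneg _))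
          exact mul_le_mul_of_nonneg_right this hpow

set_option maxHeartbeats 1600000 in
/-- Taylor-expansion identity behind the fifth-order alternative flux:
for `F(y) = f(y) - (Δx²/24) f''(y) + (7Δx⁴/5760) f''''(y)`, the divided
difference `(F(x+Δx/2) - F(x-Δx/2))/Δx` approximates `f'(x)` to sixth
order as `Δx → 0`. -/
theorem stmt_11 (f : ℝ → ℝ) (x : ℝ) (hf : ContDiff ℝ 7 f) :
    ∃ C > (0 : ℝ), ∃ δ > (0 : ℝ), ∀ Δx : ℝ, 0 < Δx → Δx < δ →
      ∀ F : ℝ → ℝ,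
        F = (fun y => f y - (Δx ^ 2 / 24) * iteratedDeriv 2 f y
          + (7 * Δx ^ 4 / 5760) * iteratedDeriv 4 f y) →
        |(F (x + Δx / 2) - F (x - Δx / 2)) / Δx - deriv f x| ≤ C * Δx ^ 6 := by
  have hf7 : ContDiff ℝ (7 : ℕ) f := by exact_mod_cast hf
  have h2 : ContDiff ℝ (5 : ℕ) (iteratedDeriv 2 f) := by
    rw [iteratedDeriv_eq_iterate]
    exact ContDiff.iterate_deriv' 5 2 hf7
  have h4 : ContDiff ℝ (3 : ℕ) (iteratedDeriv 4 f) := by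
    rw [iteratedDeriv_eq_iterate]
    exact ContDiff.iterate_deriv' 3 4 hf7
  obtain ⟨C0, hC0n, hC0⟩ := taylor_two_sided f 6 hf7 x
  obtain ⟨C2, hC2n, hC2⟩ := taylor_two_sided (iteratedDeriv 2 f) 4 h2 x
  obtain ⟨C4, hC4n, hC4⟩ := taylor_two_sided (iteratedDeriv 4 f) 2 h4 x
  refine ⟨C0 + C2 + C4 + 1, by positivity, 1, one_pos, fun Δx hΔ hΔ1 F hF => ?_⟩
  subst hF
  set s := Δx / 2 with hs
  have hsΔ : Δx = 2 * s := by rw [hs]; ring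
  have hs0 : 0 ≤ s := by positivity
  have hsI : s ∈ Set.Icc (0:ℝ) 1 := ⟨hs0, by rw [hs]; linarith⟩
  obtain ⟨e0p, e0m⟩ := hC0 s hsI
  obtain ⟨e2p, e2m⟩ := hC2 s hsI
  obtain ⟨e4p, e4m⟩ := hC4 s hsI
  -- expand the Taylor sums
  have hsum0 : ∀ t : ℝ, ∑ k ∈ Finset.range 7, t ^ k / (k.factorial : ℝ) * iteratedDeriv k f x
      = f x + t * deriv f x + t ^ 2 / 2 * iteratedDeriv 2 f x + t ^ 3 / 6 * iteratedDeriv 3 f x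
        + t ^ 4 / 24 * iteratedDeriv 4 f x + t ^ 5 / 120 * iteratedDeriv 5 f x
        + t ^ 6 / 720 * iteratedDeriv 6 f x := by
    intro t
    simp only [Finset.sum_range_succ, Finset.sum_range_zero, iteratedDeriv_zero,
      iteratedDeriv_one]
    norm_num [Nat.factorial]
    try ring
  have hsum2 : ∀ t : ℝ, ∑ k ∈ Finset.range 5, t ^ k / (k.factorial : ℝ)
        * iteratedDeriv k (iteratedDeriv 2 f) x
      = iteratedDeriv 2 f x + t * iteratedDeriv 3 f x + t ^ 2 / 2 * iteratedDeriv 4 f x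
        + t ^ 3 / 6 * iteratedDeriv 5 f x + t ^ 4 / 24 * iteratedDeriv 6 f x := by
    intro t
    simp only [Finset.sum_range_succ, Finset.sum_range_zero, iterComp, iteratedDeriv_zero,
      iteratedDeriv_one]
    norm_num [Nat.factorial]
    try ring
  have hsum4 : ∀ t : ℝ, ∑ k ∈ Finset.range 3, t ^ k / (k.factorial : ℝ)
        * iteratedDeriv k (iteratedDeriv 4 f) x
      = iteratedDeriv 4 f x + t * iteratedDeriv 5 f x + t ^ 2 / 2 * iteratedDeriv 6 f x := by
    intro t
    simp only [Finset.sum_range_succ, Finset.sum_range_zero, iterComp, iteratedDeriv_zero,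
      iteratedDeriv_one]
    norm_num [Nat.factorial]
    try ring
  rw [hsum0 s] at e0p; rw [hsum0 (-s)] at e0m
  rw [hsum2 s] at e2p; rw [hsum2 (-s)] at e2m
  rw [hsum4 s] at e4p; rw [hsum4 (-s)] at e4m
  have hne : Δx ≠ 0 := ne_of_gt hΔ
  beta_reduce
  have goal_eq : (f (x + s) - Δx ^ 2 / 24 * iteratedDeriv 2 f (x + s)
        + 7 * Δx ^ 4 / 5760 * iteratedDeriv 4 f (x + s)
        - (f (x - s) - Δx ^ 2 / 24 * iteratedDeriv 2 f (x - s)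
        + 7 * Δx ^ 4 / 5760 * iteratedDeriv 4 f (x - s))) / Δx - deriv f x
      = (f (x + s) - Δx ^ 2 / 24 * iteratedDeriv 2 f (x + s)
        + 7 * Δx ^ 4 / 5760 * iteratedDeriv 4 f (x + s)
        - (f (x - s) - Δx ^ 2 / 24 * iteratedDeriv 2 f (x - s)
        + 7 * Δx ^ 4 / 5760 * iteratedDeriv 4 f (x - s)) - Δx * deriv f x) / Δx := by
    field_simp
  rw [goal_eq, abs_div, abs_of_pos hΔ, div_le_iff₀ hΔ]
  set R0p := f (x + s) - (f x + s * deriv f x + s ^ 2 / 2 * iteratedDeriv 2 f x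
    + s ^ 3 / 6 * iteratedDeriv 3 f x + s ^ 4 / 24 * iteratedDeriv 4 f x
    + s ^ 5 / 120 * iteratedDeriv 5 f x + s ^ 6 / 720 * iteratedDeriv 6 f x) with hR0p
  set R0m := f (x - s) - (f x + -s * deriv f x + (-s) ^ 2 / 2 * iteratedDeriv 2 f x
    + (-s) ^ 3 / 6 * iteratedDeriv 3 f x + (-s) ^ 4 / 24 * iteratedDeriv 4 f x
    + (-s) ^ 5 / 120 * iteratedDeriv 5 f x + (-s) ^ 6 / 720 * iteratedDeriv 6 f x) with hR0m
  set R2p := iteratedDeriv 2 f (x + s) - (iteratedDeriv 2 f x + s * iteratedDeriv 3 f x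
    + s ^ 2 / 2 * iteratedDeriv 4 f x + s ^ 3 / 6 * iteratedDeriv 5 f x
    + s ^ 4 / 24 * iteratedDeriv 6 f x) with hR2p
  set R2m := iteratedDeriv 2 f (x - s) - (iteratedDeriv 2 f x + -s * iteratedDeriv 3 f x
    + (-s) ^ 2 / 2 * iteratedDeriv 4 f x + (-s) ^ 3 / 6 * iteratedDeriv 5 f x
    + (-s) ^ 4 / 24 * iteratedDeriv 6 f x) with hR2m
  set R4p := iteratedDeriv 4 f (x + s) - (iteratedDeriv 4 f x + s * iteratedDeriv 5 f x
    + s ^ 2 / 2 * iteratedDeriv 6 f x) with hR4p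
  set R4m := iteratedDeriv 4 f (x - s) - (iteratedDeriv 4 f x + -s * iteratedDeriv 5 f x
    + (-s) ^ 2 / 2 * iteratedDeriv 6 f x) with hR4m
  clear_value R0p R0m R2p R2m R4p R4m
  have key : f (x + s) - Δx ^ 2 / 24 * iteratedDeriv 2 f (x + s)
        + 7 * Δx ^ 4 / 5760 * iteratedDeriv 4 f (x + s)
        - (f (x - s) - Δx ^ 2 / 24 * iteratedDeriv 2 f (x - s)
        + 7 * Δx ^ 4 / 5760 * iteratedDeriv 4 f (x - s)) - Δx * deriv f x
      = (R0p - R0m) - Δx ^ 2 / 24 * (R2p - R2m) + 7 * Δx ^ 4 / 5760 * (R4p - R4m) := by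
    rw [hR0p, hR0m, hR2p, hR2m, hR4p, hR4m, hsΔ]
    ring
  rw [key]
  have habs : ∀ a b c : ℝ, |a| ≤ c → |b| ≤ c → |a - b| ≤ 2 * c := by
    intro a b c ha hb
    calc |a - b| ≤ |a| + |b| := abs_sub a b
      _ ≤ 2 * c := by linarith
  have h0 : |R0p - R0m| ≤ 2 * (C0 * s ^ 7) := habs _ _ _ e0p e0m
  have h2d : |R2p - R2m| ≤ 2 * (C2 * s ^ 5) := habs _ _ _ e2p e2m
  have h4d : |R4p - R4m| ≤ 2 * (C4 * s ^ 3) := habs _ _ _ e4p e4m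
  have h2 : |Δx ^ 2 / 24 * (R2p - R2m)| ≤ C2 * s ^ 7 := by
    rw [abs_mul, abs_of_nonneg (by positivity : (0:ℝ) ≤ Δx ^ 2 / 24)]
    calc Δx ^ 2 / 24 * |R2p - R2m| ≤ Δx ^ 2 / 24 * (2 * (C2 * s ^ 5)) :=
          mul_le_mul_of_nonneg_left h2d (by positivity)
      _ ≤ C2 * s ^ 7 := by
          rw [hsΔ]
          nlinarith [mul_nonneg hC2n (pow_nonneg hs0 7)]
  have h4 : |7 * Δx ^ 4 / 5760 * (R4p - R4m)| ≤ C4 * s ^ 7 := by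
    rw [abs_mul, abs_of_nonneg (by positivity : (0:ℝ) ≤ 7 * Δx ^ 4 / 5760)]
    calc 7 * Δx ^ 4 / 5760 * |R4p - R4m| ≤ 7 * Δx ^ 4 / 5760 * (2 * (C4 * s ^ 3)) :=
          mul_le_mul_of_nonneg_left h4d (by positivity)
      _ ≤ C4 * s ^ 7 := by
          rw [hsΔ]
          nlinarith [mul_nonneg hC4n (pow_nonneg hs0 7)]
  calc |R0p - R0m - Δx ^ 2 / 24 * (R2p - R2m) + 7 * Δx ^ 4 / 5760 * (R4p - R4m)|
      ≤ |R0p - R0m - Δx ^ 2 / 24 * (R2p - R2m)| + |7 * Δx ^ 4 / 5760 * (R4p - R4m)| :=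
        abs_add_le _ _
    _ ≤ |R0p - R0m| + |Δx ^ 2 / 24 * (R2p - R2m)| + |7 * Δx ^ 4 / 5760 * (R4p - R4m)| := by
        linarith [abs_sub (R0p - R0m) (Δx ^ 2 / 24 * (R2p - R2m))]
    _ ≤ 2 * (C0 * s ^ 7) + C2 * s ^ 7 + C4 * s ^ 7 := by linarith
    _ ≤ (C0 + C2 + C4 + 1) * Δx ^ 6 * Δx := by
        rw [hsΔ]
        nlinarith [mul_nonneg hC0n (pow_nonneg hs0 7), mul_nonneg hC2n (pow_nonneg hs0 7),
          mul_nonneg hC4n (pow_nonneg hs0 7), pow_nonneg hs0 7]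
end

section
/- If u is strictly increasing on the five-point stencil, i.e. u_{i-2} < u_{i-1} < u_i < u_{i+1} < u_{i+2}, and each quadratic interpolant q_k (k = 1,2,3) on the equal-sized substencils T_k is non-degenerate (leading coefficient nonzero), then for q₂ the critical point root₂ of q₂ satisfies root₂ ∉ (x_{i-3/2}, x_{i+3/2}) whenever |u_{i-1} - 2u_i + u_{i+1}| < (1/3)(u_{i+1} - u_{i-1}). -/
/-- Smooth monotone data is not flagged as a troubled cell: if the five
values are strictly increasing, the quadratic interpolants on the three
equal-sized substencils are non-degenerate, and the second difference on the
middle substencil satisfies `|u_{i-1} - 2u_i + u_{i+1}| < (1/3)(u_{i+1} - u_{i-1})`,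
then the critical point `root₂` of `q₂` lies outside the open interval
`(x_{i-3/2}, x_{i+3/2})` spanned by the substencil `T₂`. -/
theorem stmt_14 (h xi um2 um1 u0 up1 up2 : ℝ) (hh : 0 < h)
    (hmono1 : um2 < um1) (hmono2 : um1 < u0) (hmono3 : u0 < up1) (hmono4 : up1 < up2)
    (hnd1 : um2 - 2 * um1 + u0 ≠ 0)
    (hnd2 : um1 - 2 * u0 + up1 ≠ 0)
    (hnd3 : u0 - 2 * up1 + up2 ≠ 0)
    (root₂ : ℝ)
    (hroot : root₂ = xi - h * (up1 - um1) / (2 * um1 - 4 * u0 + 2 * up1))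
    (hsmall : |um1 - 2 * u0 + up1| < (1 / 3) * (up1 - um1)) :
    root₂ ∉ Set.Ioo (xi - 3 * h / 2) (xi + 3 * h / 2) := by
  rintro ⟨h1, h2⟩
  set d : ℝ := um1 - 2 * u0 + up1 with hd
  have hs : 0 < up1 - um1 := by linarith
  have hdabs : 0 < |d| := abs_pos.mpr hnd2
  have habs : |root₂ - xi| < 3 * h / 2 := by
    rw [abs_lt]; constructor <;> linarith
  have key : 3 * h / 2 < |root₂ - xi| := by
    have heq : root₂ - xi = -(h * (up1 - um1) / (2 * d)) := by
      rw [hroot]; ring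
    rw [heq, abs_neg, abs_div]
    rw [lt_div_iff₀ (by positivity)]
    have h2d : |2 * d| = 2 * |d| := by
      rw [abs_mul]; norm_num
    have hnum : |h * (up1 - um1)| = h * (up1 - um1) := by
      rw [abs_of_pos (by positivity)]
    rw [h2d, hnum]
    nlinarith [hsmall, hh, hdabs]
  linarith
end

section
/- The three equal-sized-substencil quadratic interpolants evaluated at the half point satisfy the linear-weight identity: (1/16)q₁(x_{i+1/2}) + (5/8)q₂(x_{i+1/2}) + (5/16)q₃(x_{i+1/2}) equals the value at x_{i+1/2} of the quartic polynomial interpolating the five points (x_{i+k}, u_{i+k}), k = -2,…,2. -/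
/-- The linear weights `(1/16, 5/8, 5/16)` reproduce the fifth-order
interpolation: the combination of the three equal-sized-substencil quadratic
interpolants at `x_{i+1/2}` equals the value there of the quartic polynomial
interpolating all five points. -/
theorem stmt_16 (h xi um2 um1 u0 up1 up2 : ℝ) (hh : 0 < h)
    (q₁ q₂ q₃ p : Polynomial ℝ)
    (hq₁d : q₁.natDegree ≤ 2) (hq₂d : q₂.natDegree ≤ 2) (hq₃d : q₃.natDegree ≤ 2)
    (hpd : p.natDegree ≤ 4)
    (hq₁1 : q₁.eval (xi - 2 * h) = um2) (hq₁2 : q₁.eval (xi - h) = um1)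
    (hq₁3 : q₁.eval xi = u0)
    (hq₂1 : q₂.eval (xi - h) = um1) (hq₂2 : q₂.eval xi = u0)
    (hq₂3 : q₂.eval (xi + h) = up1)
    (hq₃1 : q₃.eval xi = u0) (hq₃2 : q₃.eval (xi + h) = up1)
    (hq₃3 : q₃.eval (xi + 2 * h) = up2)
    (hp1 : p.eval (xi - 2 * h) = um2) (hp2 : p.eval (xi - h) = um1)
    (hp3 : p.eval xi = u0) (hp4 : p.eval (xi + h) = up1)
    (hp5 : p.eval (xi + 2 * h) = up2) :
    (1 / 16) * q₁.eval (xi + h / 2) + (5 / 8) * q₂.eval (xi + h / 2)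
      + (5 / 16) * q₃.eval (xi + h / 2) = p.eval (xi + h / 2) := by
  have h1 : q₁.natDegree < 3 := by omega
  have h2 : q₂.natDegree < 3 := by omega
  have h3 : q₃.natDegree < 3 := by omega
  have h4 : p.natDegree < 5 := by omega
  simp only [Polynomial.eval_eq_sum_range' h1, Polynomial.eval_eq_sum_range' h2,
    Polynomial.eval_eq_sum_range' h3, Polynomial.eval_eq_sum_range' h4,
    Finset.sum_range_succ, Finset.sum_range_zero] at *
  linear_combination (1/16)*((3/8)*hq₁1 - (5/4)*hq₁2 + (15/8)*hq₁3)
    + (5/8)*((-1/8)*hq₂1 + (3/4)*hq₂2 + (3/8)*hq₂3)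
    + (5/16)*((3/8)*hq₃1 + (3/4)*hq₃2 - (1/8)*hq₃3)
    - ((3/128)*hp1 - (5/32)*hp2 + (45/64)*hp3 + (15/32)*hp4 - (5/128)*hp5)
end
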